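/- Let γ : ℝ → ℝ² be defined by γ(t) = (t, 0). Then the set A = { (p₁, p₂) ∈ γ(ℝ) × γ(ℝ) | D_{(p₁,p₂)} ∘ γ : ℝ → ℝ² is an immersion with normal crossings } equals { ((a, 0), (b, 0)) | a, b ∈ ℝ, a ≠ b }, and A is dense in γ(ℝ) × γ(ℝ) (with the subspace topology induced from ℝ² × ℝ²). -/

import Mathlib

noncomputable section

abbrev E2 := EuclideanSpace ℝ (Fin 2)

/-- The point `(a, b) ∈ ℝ²`. -/
def pt (a b : ℝ) : E2 := (EuclideanSpace.equiv (Fin 2) ℝ).symm ![a, b]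

/-- The distance-squared mapping `D_p : ℝ² → ℝ²` associated to `p = (p₁, p₂)`. -/
def Dp (p₁ p₂ : E2) (x : E2) : E2 :=
  (EuclideanSpace.equiv (Fin 2) ℝ).symm ![‖x - p₁‖ ^ 2, ‖x - p₂‖ ^ 2]

/-- `f : ℝ → ℝ²` is an immersion with normal crossings: it is smooth, `f′(q) ≠ 0` everywhere,
every fiber has at most 2 elements, and at any two distinct points with the same image the
subspace `f′(q₁)ℝ + f′(q₂)ℝ` of `ℝ²` has dimension 2. -/
def IsImmersionWithNormalCrossingsR (f : ℝ → E2) : Prop :=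
  ContDiff ℝ (⊤ : ℕ∞) f ∧
  (∀ q : ℝ, deriv f q ≠ 0) ∧
  (∀ q₁ q₂ q₃ : ℝ, f q₁ = f q₂ → f q₂ = f q₃ → q₁ = q₂ ∨ q₁ = q₃ ∨ q₂ = q₃) ∧
  (∀ q₁ q₂ : ℝ, q₁ ≠ q₂ → f q₁ = f q₂ →
    Module.finrank ℝ ↥(Submodule.span ℝ {deriv f q₁, deriv f q₂}) = 2)

/-- The curve `γ(t) = (t, 0)`. -/
def γline : ℝ → E2 := fun t => pt t 0

lemma pt_sub (a b c d : ℝ) : pt a b - pt c d = pt (a-c) (b-d) := by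
  ext i; fin_cases i <;> simp [pt]
lemma norm_pt (a b : ℝ) : ‖pt a b‖^2 = a^2 + b^2 := by
  rw [EuclideanSpace.norm_eq, Real.sq_sqrt (by positivity)]
  simp [pt, Fin.sum_univ_two, sq_abs]
lemma pt_smul (u v : ℝ) : pt u v = u • pt 1 0 + v • pt 0 1 := by
  ext i; fin_cases i <;> simp [pt]
lemma pt_eq_zero {u v : ℝ} (h : pt u v = 0) : u = 0 ∧ v = 0 := by
  refine ⟨?_, ?_⟩
  · have := congrArg (· 0) h; simpa [pt] using this
  · have := congrArg (· 1) h; simpa [pt] using this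
lemma pt_inj {a b : ℝ} (h : pt a 0 = pt b 0) : a = b := by
  have := congrArg (· 0) h; simpa [pt] using this

lemma f_eq (a b : ℝ) : (fun t => Dp (pt a 0) (pt b 0) (γline t)) =
    fun t => ((t-a)^2) • pt 1 0 + ((t-b)^2) • pt 0 1 := by
  funext t
  have h1 : ‖γline t - pt a 0‖^2 = (t-a)^2 := by
    rw [γline, pt_sub]; simpa using norm_pt (t-a) 0
  have h2 : ‖γline t - pt b 0‖^2 = (t-b)^2 := by
    rw [γline, pt_sub]; simpa using norm_pt (t-b) 0
  rw [show Dp (pt a 0) (pt b 0) (γline t) = pt (‖γline t - pt a 0‖^2) (‖γline t - pt b 0‖^2) from rfl,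
    h1, h2, pt_smul]

lemma hasDerivAt_f (a b t : ℝ) :
    HasDerivAt (fun t => ((t-a)^2) • pt 1 0 + ((t-b)^2) • pt 0 1)
      (pt (2*(t-a)) (2*(t-b))) t := by
  have h1 : HasDerivAt (fun t : ℝ => (t-a)^2) (2*(t-a)) t := by
    simpa using (((hasDerivAt_id t).sub_const a).fun_pow 2)
  have h2 : HasDerivAt (fun t : ℝ => (t-b)^2) (2*(t-b)) t := by
    simpa using (((hasDerivAt_id t).sub_const b).fun_pow 2)
  have := (h1.smul_const (pt 1 0)).add (h2.smul_const (pt 0 1))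
  rwa [← pt_smul] at this

lemma deriv_f (a b t : ℝ) :
    deriv (fun t => Dp (pt a 0) (pt b 0) (γline t)) t = pt (2*(t-a)) (2*(t-b)) := by
  rw [f_eq]; exact (hasDerivAt_f a b t).deriv

lemma f_inj {a b : ℝ} (hab : a ≠ b) {t₁ t₂ : ℝ}
    (h : Dp (pt a 0) (pt b 0) (γline t₁) = Dp (pt a 0) (pt b 0) (γline t₂)) : t₁ = t₂ := by
  have e1 : ‖γline t₁ - pt a 0‖^2 = ‖γline t₂ - pt a 0‖^2 := by
    have := congrArg (· (0 : Fin 2)) h; simpa [Dp] using this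
  have e2 : ‖γline t₁ - pt b 0‖^2 = ‖γline t₂ - pt b 0‖^2 := by
    have := congrArg (· (1 : Fin 2)) h; simpa [Dp] using this
  have n1 : (t₁ - a)^2 = (t₂ - a)^2 := by
    rw [γline, γline, pt_sub, pt_sub] at e1; simpa [norm_pt] using e1
  have n2 : (t₁ - b)^2 = (t₂ - b)^2 := by
    rw [γline, γline, pt_sub, pt_sub] at e2; simpa [norm_pt] using e2
  have key : 2*(b-a)*(t₁ - t₂) = 0 := by nlinarith [n1, n2]
  rcases mul_eq_zero.mp key with h' | h'
  · exact absurd (by linarith : a = b) hab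
  · linarith

lemma immersion_of_ne {a b : ℝ} (hab : a ≠ b) :
    IsImmersionWithNormalCrossingsR (fun t => Dp (pt a 0) (pt b 0) (γline t)) := by
  refine ⟨?_, ?_, ?_, ?_⟩
  · rw [f_eq]
    exact (((contDiff_id.sub contDiff_const).pow 2).smul contDiff_const).add
      (((contDiff_id.sub contDiff_const).pow 2).smul contDiff_const)
  · intro q h
    rw [deriv_f] at h
    obtain ⟨h1, h2⟩ := pt_eq_zero h
    exact hab (by linarith)
  · intro q₁ q₂ q₃ h12 _
    exact Or.inl (f_inj hab h12)
  · intro q₁ q₂ hne h12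
    exact absurd (f_inj hab h12) hne

lemma not_immersion_eq (a : ℝ) :
    ¬ IsImmersionWithNormalCrossingsR (fun t => Dp (pt a 0) (pt a 0) (γline t)) := by
  rintro ⟨-, h, -, -⟩
  apply h a
  rw [deriv_f]
  ext i; fin_cases i <;> simp [pt]

theorem stmt14 :
    {P : E2 × E2 | (P.1 ∈ Set.range γline ∧ P.2 ∈ Set.range γline) ∧
        IsImmersionWithNormalCrossingsR (fun t => Dp P.1 P.2 (γline t))} =
      {P : E2 × E2 | ∃ a b : ℝ, a ≠ b ∧ P = (pt a 0, pt b 0)} ∧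
    Dense {P : Set.range γline × Set.range γline |
      IsImmersionWithNormalCrossingsR (fun t => Dp P.1.1 P.2.1 (γline t))} := by
  constructor
  · ext P
    simp only [Set.mem_setOf_eq]
    constructor
    · rintro ⟨⟨⟨a, ha⟩, ⟨b, hb⟩⟩, him⟩
      refine ⟨a, b, ?_, ?_⟩
      · rintro rfl
        rw [← ha, ← hb] at him
        exact not_immersion_eq a (by simpa [γline] using him)
      · rw [← Prod.mk.eta (p := P), ← ha, ← hb]; rfl
    · rintro ⟨a, b, hab, rfl⟩
      exact ⟨⟨⟨a, rfl⟩, ⟨b, rfl⟩⟩, immersion_of_ne hab⟩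
  · rw [Metric.dense_iff]
    rintro ⟨⟨p, a, rfl⟩, ⟨q, b, rfl⟩⟩ r hr
    by_cases hab : a = b
    · refine ⟨⟨⟨γline (a + r/2), a + r/2, rfl⟩, ⟨γline b, b, rfl⟩⟩, ?_, ?_⟩
      · rw [Metric.mem_ball, Prod.dist_eq]
        simp only [Subtype.dist_eq, dist_self]
        have : dist (γline (a + r/2)) (γline a) = |r/2| := by
          rw [dist_eq_norm, γline, γline, pt_sub,
            show a + r/2 - a = r/2 by ring, show (0:ℝ) - 0 = 0 by ring]
          have h := norm_pt (r/2) 0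
          rw [← Real.sqrt_sq (norm_nonneg _), h]
          rw [show (r/2)^2 + 0^2 = (r/2)^2 by ring, Real.sqrt_sq_eq_abs]
        rw [this, abs_of_pos (by linarith)]
        simp only [max_lt_iff]
        constructor <;> linarith
      · exact immersion_of_ne (by intro h; subst hab; linarith)
    · exact ⟨⟨⟨γline a, a, rfl⟩, ⟨γline b, b, rfl⟩⟩, by simp [hr], immersion_of_ne hab⟩
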